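/- Let K be a regular incidence complex of rank n with flag-transitive subgroup Γ, base flag Φ = {F_{-1},...,F_n}, and distinguished generating subgroups R_{-1},...,R_n. For 0 ≤ i ≤ j ≤ n-1 and an i-face G_i of K: G_i ≤ F_j if and only if G_i = F_i γ for some γ ∈ Γ_j := ⟨R_k : k ≠ j⟩. -/

import Mathlib

open Set Pointwise

/-- `Φ` is a flag of the subset `s` of the poset `α`: a chain contained in `s`
that is maximal among chains contained in `s`. -/
def IsFlagOf {α : Type*} [PartialOrder α] (s Φ : Set α) : Prop :=
  Φ ⊆ s ∧ IsChain (· ≤ ·) Φ ∧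
    ∀ Ψ : Set α, Ψ ⊆ s → IsChain (· ≤ ·) Ψ → Φ ⊆ Ψ → Ψ = Φ

/-- Two flags are adjacent if each differs from the other in exactly one face. -/
def FlagAdj {α : Type*} [PartialOrder α] (Φ Ψ : Set α) : Prop :=
  (Φ \ Ψ).ncard = 1 ∧ (Ψ \ Φ).ncard = 1

/-- The set `s` is flag-connected: any two flags of `s` are joined by a sequence
of successively adjacent flags of `s`. -/
def FlagConnIn {α : Type*} [PartialOrder α] (s : Set α) : Prop :=
  ∀ Φ Ψ : Set α, IsFlagOf s Φ → IsFlagOf s Ψ →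
    Relation.ReflTransGen
      (fun A B => IsFlagOf s A ∧ IsFlagOf s B ∧ FlagAdj A B) Φ Ψ

/-- The section between `F` and `G` is connected: any two of its proper faces are
joined by a finite sequence of successively incident proper faces of the section. -/
def ConnIn {α : Type*} [PartialOrder α] (F G : α) : Prop :=
  ∀ H K : α, F < H → H < G → F < K → K < G →
    Relation.ReflTransGen
      (fun a b => F < a ∧ a < G ∧ F < b ∧ b < G ∧ (a ≤ b ∨ b ≤ a)) H K

/-- An incidence complex of rank `n`: a bounded ranked poset (rank function `rk`
with range `{-1,…,n}`, strictly monotone, all flags having `n+2` elements hitting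
every rank), strongly connected (I3), and with at least two `i`-faces between any
incident pair of faces of ranks `i-1` and `i+1` (I4). -/
structure IncComplex (α : Type*) [PartialOrder α] [BoundedOrder α]
    (n : ℤ) (rk : α → ℤ) : Prop where
  rk_bot : rk (⊥ : α) = -1
  rk_top : rk (⊤ : α) = n
  rk_strictMono : ∀ a b : α, a < b → rk a < rk b
  chain_flag : ∀ c : Set α, IsChain (· ≤ ·) c →
    ∃ Φ : Set α, c ⊆ Φ ∧ IsFlagOf Set.univ Φ ∧ Φ.ncard = (n + 2).toNat
  flag_rk : ∀ Φ : Set α, IsFlagOf Set.univ Φ →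
    ∀ i ∈ Set.Icc (-1 : ℤ) n, ∃ a ∈ Φ, rk a = i
  strong_conn : ∀ F G : α, F ≤ G → 2 ≤ rk G - rk F - 1 → ConnIn F G
  two_between : ∀ F G : α, F < G → rk G = rk F + 2 →
    ∃ H H' : α, H ≠ H' ∧ F < H ∧ H < G ∧ F < H' ∧ H' < G

/-- A complex is regular if its automorphism group acts transitively on flags. -/
def IsRegularIC (α : Type*) [PartialOrder α] : Prop :=
  ∀ Φ Ψ : Set α, IsFlagOf Set.univ Φ → IsFlagOf Set.univ Ψ →
    ∃ g : α ≃o α, ⇑g '' Φ = Ψ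

/-- `Γ` is a flag-transitive subgroup of the automorphism group. -/
def FlagTrans {α : Type*} [PartialOrder α] (Γ : Subgroup (α ≃o α)) : Prop :=
  ∀ Φ Ψ : Set α, IsFlagOf Set.univ Φ → IsFlagOf Set.univ Ψ →
    ∃ g ∈ Γ, ⇑g '' Φ = Ψ

/-- The distinguished generating subset `R_i`: the stabilizer in `Γ` of
`Φ \ {F_i}`, where `F` enumerates the base flag by rank. -/
def Rset {α : Type*} [PartialOrder α] (Γ : Subgroup (α ≃o α)) (F : ℤ → α)
    (n i : ℤ) : Set (α ≃o α) :=
  {g | g ∈ Γ ∧ ∀ j ∈ Set.Icc (-1 : ℤ) n, j ≠ i → g (F j) = F j}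

/-!
A face `G ≤ F_j` lies in a flag `Ψ` through `F_j`. Since all sections of rank at least two are
connected, an induction on the rank of the section (splicing flags at a common face) shows that
flags through `F_j` are joined by a sequence of adjacent flags through `F_j`. Flag-transitivity
turns each adjacency step, at some rank `k ≠ j`, into right multiplication by an element of `R_k`;
so `Ψ = γ Φ` with `γ ∈ Γ_j`, and `γ F_i = G` because automorphisms preserve ranks. Conversely
`Γ_j` fixes `F_j`, so it maps `F_i ≤ F_j` below `F_j`.
-/

open Relation

section Flags

variable {α : Type*} [PartialOrder α] {X Y : Set α} {a b c z A B : α}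

theorem isFlagOf_univ_iff_isMaxChain : IsFlagOf univ X ↔ IsMaxChain (· ≤ ·) X := by
  simp only [IsFlagOf, IsMaxChain, subset_univ, true_and, forall_const]
  exact and_congr_right fun _ => forall₂_congr fun _ _ => forall_congr' fun _ => eq_comm

namespace IsFlagOf

theorem total (hX : IsFlagOf univ X) (ha : a ∈ X) (hb : b ∈ X) : a ≤ b ∨ b ≤ a :=
  hX.2.1.total ha hb

theorem eq_of_subset (hX : IsFlagOf univ X) (hY : IsFlagOf univ Y) (h : X ⊆ Y) : X = Y :=
  (hX.2.2 Y (subset_univ _) hY.2.1 h).symm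

theorem mem_of_forall (hX : IsFlagOf univ X) (h : ∀ w ∈ X, z ≤ w ∨ w ≤ z) : z ∈ X :=
  (hX.2.2 _ (subset_univ _) (hX.2.1.insert fun w hw _ => h w hw) (subset_insert z X)) ▸
    mem_insert z X

theorem bot_mem [OrderBot α] (hX : IsFlagOf univ X) : ⊥ ∈ X :=
  (isFlagOf_univ_iff_isMaxChain.mp hX).bot_mem

theorem top_mem [OrderTop α] (hX : IsFlagOf univ X) : ⊤ ∈ X :=
  (isFlagOf_univ_iff_isMaxChain.mp hX).top_mem

theorem image (hX : IsFlagOf univ X) (g : α ≃o α) : IsFlagOf univ (g '' X) :=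
  isFlagOf_univ_iff_isMaxChain.mpr ((isFlagOf_univ_iff_isMaxChain.mp hX).image g)

theorem le_or_ge_of_notMem_Ioo (hX : IsFlagOf univ X) (hA : A ∈ X) (hB : B ∈ X) (hz : z ∈ X)
    (h : z ∉ Ioo A B) : z ≤ A ∨ B ≤ z := by
  by_contra! h'
  exact h ⟨hX.2.1.lt_of_not_ge hz hA h'.1, hX.2.1.lt_of_not_ge hB hz h'.2⟩

theorem inter_Iic_union_inter_Ici (hX : IsFlagOf univ X) (hY : IsFlagOf univ Y)
    (hcX : c ∈ X) (hcY : c ∈ Y) : IsFlagOf univ (X ∩ Iic c ∪ Y ∩ Ici c) := by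
  have hchain : IsChain (· ≤ ·) (X ∩ Iic c ∪ Y ∩ Ici c) := by
    rintro x (⟨hxX, hxc⟩ | ⟨hxY, hcx⟩) y (⟨hyX, hyc⟩ | ⟨hyY, hcy⟩) hne
    · exact hX.2.1 hxX hyX hne
    · exact .inl (hxc.trans hcy)
    · exact .inr (hyc.trans hcx)
    · exact hY.2.1 hxY hyY hne
  refine ⟨subset_univ _, hchain, fun Θ _ hΘ hsub => (subset_antisymm ?_ hsub)⟩
  have hcΘ : c ∈ Θ := hsub (.inl ⟨hcX, le_rfl⟩)
  intro z hz
  rcases hΘ.total hz hcΘ with hzc | hcz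
  · refine .inl ⟨hX.mem_of_forall fun w hw => ?_, hzc⟩
    rcases hX.total hw hcX with hwc | hcw
    · exact hΘ.total hz (hsub (.inl ⟨hw, hwc⟩))
    · exact .inl (hzc.trans hcw)
  · refine .inr ⟨hY.mem_of_forall fun w hw => ?_, hcz⟩
    rcases hY.total hw hcY with hwc | hcw
    · exact .inr (hwc.trans hcz)
    · exact hΘ.total hz (hsub (.inr ⟨hw, hcw⟩))

theorem diff_Ioo_subset_of_diff_Ioo_subset (hX : IsFlagOf univ X) (hY : IsFlagOf univ Y)
    (hA : A ∈ X) (hB : B ∈ X) (h : X \ Ioo A B ⊆ Y) : Y \ Ioo A B ⊆ X := by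
  have hAY : A ∈ Y := h ⟨hA, fun hA' => hA'.1.false⟩
  have hBY : B ∈ Y := h ⟨hB, fun hB' => hB'.2.false⟩
  rintro z ⟨hzY, hz⟩
  refine hX.mem_of_forall fun w hw => ?_
  by_cases hw' : w ∈ Ioo A B
  · rcases hY.le_or_ge_of_notMem_Ioo hAY hBY hzY hz with hzA | hBz
    · exact .inl (hzA.trans hw'.1.le)
    · exact .inr (hw'.2.le.trans hBz)
  · exact hY.total hzY (h ⟨hw, hw'⟩)

theorem isChain_insert_insert_diff_Ioo {c' : α} (hX : IsFlagOf univ X) (hAX : A ∈ X)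
    (hBX : B ∈ X) (hc : c ∈ Ioo A B) (hc' : c' ∈ Ioo A B) (hcc' : c ≤ c' ∨ c' ≤ c) :
    IsChain (· ≤ ·) (insert c (insert c' (X \ Ioo A B))) := by
  have hcomp : ∀ d ∈ Ioo A B, ∀ w ∈ X \ Ioo A B, d ≤ w ∨ w ≤ d := fun d hd w hw =>
    (hX.le_or_ge_of_notMem_Ioo hAX hBX hw.1 hw.2).elim (fun h => .inr (h.trans hd.1.le))
      (fun h => .inl (hd.2.le.trans h))
  refine ((hX.2.1.mono sdiff_subset).insert fun w hw _ => hcomp c' hc' w hw).insert ?_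
  rintro w (rfl | hw) -
  exacts [hcc', hcomp c hc w hw]

end IsFlagOf

theorem mem_Ioo_of_mem_diff (h : X \ Ioo A B ⊆ Y) (hz : z ∈ X \ Y) : z ∈ Ioo A B :=
  by_contra fun h' => hz.2 (h ⟨hz.1, h'⟩)

end Flags

namespace IncComplex

variable {α : Type*} [PartialOrder α] [BoundedOrder α] {n : ℤ} {rk : α → ℤ}
  {X : Set α} {a b : α}

theorem strictMono (hK : IncComplex α n rk) : StrictMono rk := fun a b => hK.rk_strictMono a b

theorem rk_mem_Icc (hK : IncComplex α n rk) (a : α) : rk a ∈ Icc (-1) n :=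
  ⟨hK.rk_bot ▸ hK.strictMono.monotone bot_le, hK.rk_top ▸ hK.strictMono.monotone le_top⟩

theorem eq_of_mem_flag (hK : IncComplex α n rk) (hX : IsFlagOf univ X) (ha : a ∈ X) (hb : b ∈ X)
    (h : rk a = rk b) : a = b := by
  by_contra hne
  rcases hX.total ha hb with hab | hba
  · exact (hK.strictMono (hab.lt_of_ne hne)).ne h
  · exact (hK.strictMono (hba.lt_of_ne (Ne.symm hne))).ne' h

theorem lt_of_mem_flag (hK : IncComplex α n rk) (hX : IsFlagOf univ X) (ha : a ∈ X) (hb : b ∈ X)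
    (h : rk a < rk b) : a < b := by
  rcases hX.total ha hb with hab | hba
  · exact hab.lt_of_ne (by rintro rfl; exact h.false)
  · exact absurd (hK.strictMono.monotone hba) h.not_ge

theorem le_of_mem_flag (hK : IncComplex α n rk) (hX : IsFlagOf univ X) (ha : a ∈ X) (hb : b ∈ X)
    (h : rk a ≤ rk b) : a ≤ b :=
  h.lt_or_eq.elim (fun h => (hK.lt_of_mem_flag hX ha hb h).le)
    (fun h => (hK.eq_of_mem_flag hX ha hb h).le)

theorem subsingleton_inter_Ioo (hK : IncComplex α n rk) (hX : IsFlagOf univ X) {A B : α}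
    (h : rk B ≤ rk A + 2) : (X ∩ Ioo A B).Subsingleton := by
  rintro x ⟨hx, hAx, hxB⟩ y ⟨hy, hAy, hyB⟩
  have := hK.strictMono hAx; have := hK.strictMono hxB
  have := hK.strictMono hAy; have := hK.strictMono hyB
  exact hK.eq_of_mem_flag hX hx hy (by omega)

theorem rk_eq_add_one_of_covBy (hK : IncComplex α n rk) (h : b ⋖ a) : rk a = rk b + 1 := by
  obtain ⟨X, hsub, hX, -⟩ := hK.chain_flag {b, a} (IsChain.pair h.le)
  have hb : b ∈ X := hsub (mem_insert b _)
  have ha : a ∈ X := hsub (mem_insert_of_mem b rfl)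
  have hba := hK.strictMono h.lt
  obtain ⟨c, hc, hrk⟩ := hK.flag_rk X hX (rk b + 1)
    ⟨by linarith [(hK.rk_mem_Icc b).1], by linarith [(hK.rk_mem_Icc a).2]⟩
  have hbc : b < c := hK.lt_of_mem_flag hX hb hc (by omega)
  have hca : c ≤ a := hK.le_of_mem_flag hX hc ha (by omega)
  rw [← hrk, hca.eq_of_not_lt (h.2 hbc)]

theorem exists_covBy (hK : IncComplex α n rk) (ha : -1 < rk a) : ∃ b, b ⋖ a := by
  obtain ⟨X, hsub, hX, -⟩ := hK.chain_flag {a} IsChain.singleton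
  obtain ⟨b, hb, hrk⟩ := hK.flag_rk X hX (rk a - 1) ⟨by omega, by linarith [(hK.rk_mem_Icc a).2]⟩
  refine ⟨b, hK.lt_of_mem_flag hX hb (hsub rfl) (by omega), fun c hbc hca => ?_⟩
  have := hK.strictMono hbc; have := hK.strictMono hca
  omega

theorem rk_apply (hK : IncComplex α n rk) (g : α ≃o α) (a : α) : rk (g a) = rk a := by
  suffices ∀ k, -1 ≤ k → ∀ a, rk a = k → rk (g a) = k from this _ (hK.rk_mem_Icc a).1 a rfl
  intro k hk
  induction k, hk using Int.leInduction with
  | base =>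
    intro a ha
    obtain rfl : a = ⊥ := by
      by_contra h
      have := hK.strictMono (bot_lt_iff_ne_bot.mpr h)
      rw [hK.rk_bot] at this; omega
    rw [map_bot, hK.rk_bot]
  | succ k hk ih =>
    intro a ha
    obtain ⟨b, hb⟩ := hK.exists_covBy (a := a) (by omega)
    have hrk := hK.rk_eq_add_one_of_covBy hb
    rw [hK.rk_eq_add_one_of_covBy ((apply_covBy_apply_iff g).mpr hb), ih b (by omega)]

end IncComplex

section FlagConnectivity

variable {α : Type*} [PartialOrder α] {X Y : Set α} {A B c : α}

def FlagAdjOver (C X Y : Set α) : Prop :=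
  IsFlagOf univ X ∧ IsFlagOf univ Y ∧ FlagAdj X Y ∧ C ⊆ X ∧ C ⊆ Y

theorem FlagAdjOver.reflTransGen_mono {C D : Set α} (hCD : C ⊆ D)
    (h : ReflTransGen (FlagAdjOver D) X Y) : ReflTransGen (FlagAdjOver C) X Y :=
  ReflTransGen.mono
    (fun _ _ ⟨hX, hY, hXY, hDX, hDY⟩ => ⟨hX, hY, hXY, hCD.trans hDX, hCD.trans hDY⟩) _ _ h

/-- Flag-connectivity of the section `B/A`, stated for the flags of the whole poset through `A`
and `B`: along the path, the faces outside `(A, B)` stay fixed. -/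
def SectionFlagConnected (A B : α) : Prop :=
  ∀ X Y : Set α, IsFlagOf univ X → IsFlagOf univ Y → A ∈ X → B ∈ X → X \ Ioo A B ⊆ Y →
    ReflTransGen (FlagAdjOver (X \ Ioo A B)) X Y

/-- The path passes through the flag that follows `X` up to `c` and `Y` from `c` on. -/
theorem SectionFlagConnected.splice (hAc : SectionFlagConnected A c)
    (hcB : SectionFlagConnected c B) (hX : IsFlagOf univ X) (hY : IsFlagOf univ Y)
    (hAX : A ∈ X) (hBX : B ∈ X) (hcX : c ∈ X) (hcY : c ∈ Y) (hAc' : A ≤ c) (hcB' : c ≤ B)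
    (hXY : X \ Ioo A B ⊆ Y) : ReflTransGen (FlagAdjOver (insert c (X \ Ioo A B))) X Y := by
  have hΘ := hX.inter_Iic_union_inter_Ici hY hcX hcY
  have hcΘ : c ∈ X ∩ Iic c ∪ Y ∩ Ici c := .inl ⟨hcX, le_rfl⟩
  have hXΘ : X \ Ioo c B ⊆ X ∩ Iic c ∪ Y ∩ Ici c := by
    rintro z ⟨hzX, hz⟩
    rcases hX.le_or_ge_of_notMem_Ioo hcX hBX hzX hz with hzc | hBz
    · exact .inl ⟨hzX, hzc⟩
    · exact .inr ⟨hXY ⟨hzX, fun h => h.2.not_ge hBz⟩, hcB'.trans hBz⟩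
  have hΘY : (X ∩ Iic c ∪ Y ∩ Ici c) \ Ioo A c ⊆ Y := by
    rintro z ⟨⟨hzX, hzc⟩ | ⟨hzY, -⟩, hz⟩
    · rcases hX.le_or_ge_of_notMem_Ioo hAX hcX hzX hz with hzA | hcz
      · exact hXY ⟨hzX, fun h => h.1.not_ge hzA⟩
      · exact le_antisymm hzc hcz ▸ hcY
    · exact hzY
  have hleft : insert c (X \ Ioo A B) ⊆ X \ Ioo c B :=
    insert_subset ⟨hcX, fun h => h.1.false⟩ (sdiff_subset_sdiff_right (Ioo_subset_Ioo_left hAc'))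
  have hright : insert c (X \ Ioo A B) ⊆ (X ∩ Iic c ∪ Y ∩ Ici c) \ Ioo A c := by
    refine insert_subset ⟨hcΘ, fun h => h.2.false⟩ ?_
    rintro z ⟨hzX, hz⟩
    rcases hX.le_or_ge_of_notMem_Ioo hAX hBX hzX hz with hzA | hBz
    · exact ⟨.inl ⟨hzX, hzA.trans hAc'⟩, fun h => h.1.not_ge hzA⟩
    · exact ⟨.inr ⟨hXY ⟨hzX, hz⟩, hcB'.trans hBz⟩, fun h => h.2.not_ge (hcB'.trans hBz)⟩
  exact (FlagAdjOver.reflTransGen_mono hleft (hcB _ _ hX hΘ hcX hBX hXΘ)).trans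
    (FlagAdjOver.reflTransGen_mono hright (hAc _ _ hΘ hY (.inl ⟨hAX, hAc'⟩) hcΘ hΘY))

end FlagConnectivity

namespace IncComplex

variable {α : Type*} [PartialOrder α] [BoundedOrder α] {n : ℤ} {rk : α → ℤ} {X Y : Set α}
  {A B : α}

theorem ncard_diff_eq_one (hK : IncComplex α n rk) (hX : IsFlagOf univ X)
    (hY : IsFlagOf univ Y) (hXY : X \ Ioo A B ⊆ Y) (hne : X ≠ Y) (h : rk B ≤ rk A + 2) :
    (X \ Y).ncard = 1 := by
  obtain ⟨x, hx⟩ := sdiff_nonempty.mpr fun hsub => hne (hX.eq_of_subset hY hsub)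
  have hsub : X \ Y ⊆ X ∩ Ioo A B := fun z hz => ⟨hz.1, mem_Ioo_of_mem_diff hXY hz⟩
  exact ncard_eq_one.mpr ⟨x, ((hK.subsingleton_inter_Ioo hX h).anti hsub).eq_singleton_of_mem hx⟩

theorem flagAdjOver_of_rk_le (hK : IncComplex α n rk) (hX : IsFlagOf univ X)
    (hY : IsFlagOf univ Y) (hAX : A ∈ X) (hBX : B ∈ X) (hXY : X \ Ioo A B ⊆ Y) (hne : X ≠ Y)
    (h : rk B ≤ rk A + 2) : FlagAdjOver (X \ Ioo A B) X Y :=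
  ⟨hX, hY, ⟨hK.ncard_diff_eq_one hX hY hXY hne h,
    hK.ncard_diff_eq_one hY hX (hX.diff_Ioo_subset_of_diff_Ioo_subset hY hAX hBX hXY) hne.symm h⟩,
    sdiff_subset, hXY⟩

/-- A path `c = c₀, c₁, …, b` of successively incident faces inside `(A, B)` is followed by
flags: a flag through `cₖ` and `cₖ₊₁` is reached from a flag through `cₖ` by splicing at `cₖ`. -/
theorem reflTransGen_of_path (hK : IncComplex α n rk)
    (hsplit : ∀ c ∈ Ioo A B, SectionFlagConnected A c ∧ SectionFlagConnected c B)
    (hY : IsFlagOf univ Y) {b c : α} (hbY : b ∈ Y)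
    (hpath : ReflTransGen (fun x y => A < x ∧ x < B ∧ A < y ∧ y < B ∧ (x ≤ y ∨ y ≤ x)) c b)
    (hc : c ∈ Ioo A B) (hX : IsFlagOf univ X) (hAX : A ∈ X) (hBX : B ∈ X) (hcX : c ∈ X)
    (hXY : X \ Ioo A B ⊆ Y) : ReflTransGen (FlagAdjOver (X \ Ioo A B)) X Y := by
  induction hpath using ReflTransGen.head_induction_on generalizing X with
  | refl =>
    exact FlagAdjOver.reflTransGen_mono (subset_insert _ _) ((hsplit b hc).1.splice
      (hsplit b hc).2 hX hY hAX hBX hcX hbY hc.1.le hc.2.le hXY)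
  | @head c c' hcc' _ ih =>
    obtain ⟨-, -, hAc', hc'B, hcomp⟩ := hcc'
    obtain ⟨Θ, hsub, hΘ, -⟩ :=
      hK.chain_flag _ (hX.isChain_insert_insert_diff_Ioo hAX hBX hc ⟨hAc', hc'B⟩ hcomp)
    have hXΘ : X \ Ioo A B ⊆ Θ := fun z hz => hsub (.inr (.inr hz))
    have hAΘ : A ∈ Θ := hXΘ ⟨hAX, fun h => h.1.false⟩
    have hBΘ : B ∈ Θ := hXΘ ⟨hBX, fun h => h.2.false⟩
    have hΘY : Θ \ Ioo A B ⊆ Y := fun z hz =>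
      hXY ⟨hX.diff_Ioo_subset_of_diff_Ioo_subset hΘ hAX hBX hXΘ hz, hz.2⟩
    refine (FlagAdjOver.reflTransGen_mono (subset_insert _ _) ((hsplit c hc).1.splice
      (hsplit c hc).2 hX hΘ hAX hBX hcX (hsub (.inl rfl)) hc.1.le hc.2.le hXΘ)).trans ?_
    exact FlagAdjOver.reflTransGen_mono (fun z hz => (⟨hXΘ hz, hz.2⟩ : z ∈ Θ \ Ioo A B))
      (ih ⟨hAc', hc'B⟩ hΘ hAΘ hBΘ (hsub (.inr (.inl rfl))) hΘY)

theorem sectionFlagConnected_of_forall_mem_Ioo (hK : IncComplex α n rk) (hAB : A ≤ B)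
    (hsplit : ∀ c ∈ Ioo A B, SectionFlagConnected A c ∧ SectionFlagConnected c B) :
    SectionFlagConnected A B := by
  intro X Y hX hY hAX hBX hXY
  rcases eq_or_ne X Y with rfl | hne
  · exact .refl
  by_cases hgap : rk B ≤ rk A + 2
  · exact .single (hK.flagAdjOver_of_rk_le hX hY hAX hBX hXY hne hgap)
  obtain ⟨a, ha⟩ := sdiff_nonempty.mpr fun hsub => hne (hX.eq_of_subset hY hsub)
  obtain ⟨b, hb⟩ := sdiff_nonempty.mpr fun hsub => hne (hY.eq_of_subset hX hsub).symm
  have haI := mem_Ioo_of_mem_diff hXY ha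
  have hbI := mem_Ioo_of_mem_diff (hX.diff_Ioo_subset_of_diff_Ioo_subset hY hAX hBX hXY) hb
  exact hK.reflTransGen_of_path hsplit hY hb.1
    (hK.strong_conn A B hAB (by omega) a b haI.1 haI.2 hbI.1 hbI.2) haI hX hAX hBX ha.1 hXY

theorem sectionFlagConnected (hK : IncComplex α n rk) (hAB : A ≤ B) :
    SectionFlagConnected A B := by
  suffices ∀ d : ℕ, ∀ A B : α, A ≤ B → rk B - rk A ≤ d → SectionFlagConnected A B from
    this _ A B hAB (Int.self_le_toNat _)
  intro d
  induction d with
  | zero =>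
    refine fun A B hAB hd => hK.sectionFlagConnected_of_forall_mem_Ioo hAB fun c hc => ?_
    have := hK.strictMono hc.1; have := hK.strictMono hc.2
    omega
  | succ d ih =>
    refine fun A B hAB hd => hK.sectionFlagConnected_of_forall_mem_Ioo hAB fun c hc => ?_
    have := hK.strictMono hc.1; have := hK.strictMono hc.2
    exact ⟨ih A c hc.1.le (by omega), ih c B hc.2.le (by omega)⟩

theorem reflTransGen_flagAdjOver_singleton (hK : IncComplex α n rk) (hX : IsFlagOf univ X)
    (hY : IsFlagOf univ Y) {c : α} (hcX : c ∈ X) (hcY : c ∈ Y) :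
    ReflTransGen (FlagAdjOver {c}) X Y := by
  refine FlagAdjOver.reflTransGen_mono (singleton_subset_iff.mpr (mem_insert c _))
    ((hK.sectionFlagConnected bot_le).splice (hK.sectionFlagConnected le_top) hX hY
      hX.bot_mem hX.top_mem hcX hcY bot_le le_top fun z ⟨_, hz⟩ => ?_)
  rcases eq_bot_or_bot_lt z with rfl | hbz
  · exact hY.bot_mem
  rcases eq_top_or_lt_top z with rfl | hzt
  · exact hY.top_mem
  exact absurd ⟨hbz, hzt⟩ hz

end IncComplex

section GeneratingSubgroups

variable {α : Type*} [PartialOrder α] {n : ℤ} {Γ : Subgroup (α ≃o α)} {F : ℤ → α}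

theorem exists_mem_Rset_image_eq [BoundedOrder α] {rk : α → ℤ} (hK : IncComplex α n rk)
    (hΓ : FlagTrans Γ) (hFflag : IsFlagOf univ (F '' Icc (-1) n))
    (hFrk : ∀ i ∈ Icc (-1 : ℤ) n, rk (F i) = i)
    (γ : α ≃o α) {Y : Set α} (hY : IsFlagOf univ Y) {x : α}
    (hx : γ '' (F '' Icc (-1) n) \ Y = {x}) :
    ∃ g ∈ Rset Γ F n (rk x), ⇑(γ * g) '' (F '' Icc (-1) n) = Y := by
  have hY' := hY.image γ⁻¹
  obtain ⟨g, hgΓ, hg⟩ := hΓ _ _ hFflag hY'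
  refine ⟨g, ⟨hgΓ, fun m hm hmx => ?_⟩, ?_⟩
  · have hγFm : γ (F m) ∈ Y := by
      by_contra h
      have hmem : γ (F m) ∈ γ '' (F '' Icc (-1) n) \ Y := ⟨mem_image_of_mem γ ⟨m, hm, rfl⟩, h⟩
      rw [hx, mem_singleton_iff] at hmem
      exact hmx (by rw [← hmem, hK.rk_apply, hFrk m hm])
    have hFm : F m ∈ ⇑γ⁻¹ '' Y := ⟨γ (F m), hγFm, RelIso.inv_apply_self γ _⟩
    exact hK.eq_of_mem_flag hY' (hg ▸ mem_image_of_mem g ⟨m, hm, rfl⟩) hFm (hK.rk_apply g _)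
  · rw [RelIso.coe_mul, image_comp, hg, ← image_comp, ← RelIso.coe_mul, mul_inv_cancel,
      RelIso.coe_one, image_id]

theorem exists_mem_closure_image_eq_of_reflTransGen [BoundedOrder α] {rk : α → ℤ}
    (hK : IncComplex α n rk) (hΓ : FlagTrans Γ) (hFflag : IsFlagOf univ (F '' Icc (-1) n))
    (hFrk : ∀ i ∈ Icc (-1 : ℤ) n, rk (F i) = i) {j : ℤ} (hj : j ∈ Icc (-1) n) {Y : Set α}
    (hY : ReflTransGen (FlagAdjOver {F j}) (F '' Icc (-1) n) Y) :
    ∃ γ ∈ Subgroup.closure (⋃ k ∈ Icc (-1 : ℤ) n \ {j}, Rset Γ F n k),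
      ⇑γ '' (F '' Icc (-1) n) = Y := by
  induction hY with
  | refl => exact ⟨1, one_mem _, by rw [RelIso.coe_one, image_id]⟩
  | tail _ hXY ih =>
    obtain ⟨γ, hγ, rfl⟩ := ih
    obtain ⟨hX, hY, ⟨hXY, -⟩, hjX, hjY⟩ := hXY
    obtain ⟨x, hx⟩ := ncard_eq_one.mp hXY
    have hxX : x ∈ γ '' (F '' Icc (-1) n) \ _ := hx ▸ mem_singleton x
    have hxj : rk x ≠ j := fun h => by
      have hxF : x = F j :=
        hK.eq_of_mem_flag hX hxX.1 (singleton_subset_iff.mp hjX) (by rw [h, hFrk j hj])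
      exact hxX.2 (hxF ▸ singleton_subset_iff.mp hjY)
    obtain ⟨g, hg, hgY⟩ := exists_mem_Rset_image_eq hK hΓ hFflag hFrk γ hY hx
    exact ⟨γ * g, mul_mem hγ (Subgroup.subset_closure (mem_biUnion ⟨hK.rk_mem_Icc x, hxj⟩ hg)),
      hgY⟩

theorem apply_eq_of_mem_closure {j : ℤ} (hj : j ∈ Icc (-1) n) {γ : α ≃o α}
    (hγ : γ ∈ Subgroup.closure (⋃ k ∈ Icc (-1 : ℤ) n \ {j}, Rset Γ F n k)) : γ (F j) = F j := by
  refine MulAction.mem_stabilizer_iff.mp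
    ((Subgroup.closure_le (MulAction.stabilizer (α ≃o α) (F j))).mpr ?_ hγ)
  intro g hg
  simp only [mem_iUnion] at hg
  obtain ⟨k, ⟨-, hkj⟩, hgk⟩ := hg
  exact hgk.2 j hj (Ne.symm hkj)

end GeneratingSubgroups

theorem face_below_base_face_iff_general
    {α : Type*} [PartialOrder α] [BoundedOrder α] (n : ℤ) (rk : α → ℤ)
    (hK : IncComplex α n rk)
    (Γ : Subgroup (α ≃o α)) (hΓ : FlagTrans Γ)
    (F : ℤ → α) (hFflag : IsFlagOf Set.univ (F '' Set.Icc (-1 : ℤ) n))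
    (hFrk : ∀ i ∈ Set.Icc (-1 : ℤ) n, rk (F i) = i)
    (i j : ℤ) (hij : i ≤ j) (hj : j ≤ n - 1)
    (Gi : α) (hGi : rk Gi = i) :
    Gi ≤ F j ↔
      ∃ γ ∈ Subgroup.closure
          (⋃ k ∈ Set.Icc (-1 : ℤ) n \ {j}, Rset Γ F n k),
        γ (F i) = Gi := by
  have hi : i ∈ Icc (-1 : ℤ) n := ⟨hGi ▸ (hK.rk_mem_Icc Gi).1, by omega⟩
  have hj' : j ∈ Icc (-1 : ℤ) n := ⟨hi.1.trans hij, by omega⟩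
  constructor
  · intro hle
    obtain ⟨Ψ, hsub, hΨ, -⟩ := hK.chain_flag {Gi, F j} (IsChain.pair hle)
    obtain ⟨γ, hγ, rfl⟩ := exists_mem_closure_image_eq_of_reflTransGen hK hΓ hFflag hFrk hj'
      (hK.reflTransGen_flagAdjOver_singleton hFflag hΨ ⟨j, hj', rfl⟩ (hsub (.inr rfl)))
    exact ⟨γ, hγ, hK.eq_of_mem_flag hΨ ⟨F i, ⟨i, hi, rfl⟩, rfl⟩ (hsub (.inl rfl))
      (by rw [hK.rk_apply, hFrk i hi, hGi])⟩
  · rintro ⟨γ, hγ, rfl⟩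
    calc γ (F i) ≤ γ (F j) := γ.monotone (hK.le_of_mem_flag hFflag ⟨i, hi, rfl⟩ ⟨j, hj', rfl⟩
          (by rw [hFrk i hi, hFrk j hj']; exact hij))
      _ = F j := apply_eq_of_mem_closure hj' hγ

/-- an `i`-face `G_i` satisfies `G_i ≤ F_j` iff `G_i` is the image
of the base `i`-face under some `γ` in `Γ_j = ⟨R_k : k ≠ j⟩`. -/
theorem face_below_base_face_iff
    {α : Type*} [PartialOrder α] [BoundedOrder α] (n : ℤ) (rk : α → ℤ)
    (hn : 1 ≤ n) (hK : IncComplex α n rk)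
    (Γ : Subgroup (α ≃o α)) (hΓ : FlagTrans Γ)
    (F : ℤ → α) (hFflag : IsFlagOf Set.univ (F '' Set.Icc (-1 : ℤ) n))
    (hFrk : ∀ i ∈ Set.Icc (-1 : ℤ) n, rk (F i) = i)
    (i j : ℤ) (h0i : 0 ≤ i) (hij : i ≤ j) (hj : j ≤ n - 1)
    (Gi : α) (hGi : rk Gi = i) :
    Gi ≤ F j ↔
      ∃ γ ∈ Subgroup.closure
          (⋃ k ∈ Set.Icc (-1 : ℤ) n \ {j}, Rset Γ F n k),
        γ (F i) = Gi :=
  face_below_base_face_iff_general n rk hK Γ hΓ F hFflag hFrk i j hij hj Gi hGi
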